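/- Let 𝕂 be an algebraically closed field of characteristic p > 0 with p not dividing r, and let M be an irreducible completely splittable integral module over the degenerate affine Yokonuma–Hecke algebra D_{r,n}. Then for every weight (α, j) = ((α_1,…,α_n), (j_1,…,j_n)) ∈ I^n × J^n of M and every 1 ≤ i < n, one has α_i ≠ α_{i+1} whenever j_i = j_{i+1}. -/
import Mathlib


open scoped BigOperators

namespace DegYH

variable (K : Type) [Field K]

inductive DGen (n : ℕ) : Type
  | t : Fin n → DGen n
  | f : Fin (n - 1) → DGen n
  | x : Fin n → DGen n

abbrev DFA (n : ℕ) : Type := FreeAlgebra K (DGen n)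

noncomputable def dt {n : ℕ} (j : Fin n) : DFA K n := FreeAlgebra.ι K (DGen.t j)
noncomputable def df {n : ℕ} (i : Fin (n - 1)) : DFA K n := FreeAlgebra.ι K (DGen.f i)
noncomputable def dx {n : ℕ} (j : Fin n) : DFA K n := FreeAlgebra.ι K (DGen.x j)

def loFin {n : ℕ} (i : Fin (n - 1)) : Fin n := ⟨i.1, by have := i.2; omega⟩
def hiFin {n : ℕ} (i : Fin (n - 1)) : Fin n := ⟨i.1 + 1, by have := i.2; omega⟩

/-- The simple transposition `s_i` acting on indices. -/
def sAct {n : ℕ} (i : Fin (n - 1)) (j : Fin n) : Fin n :=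
  if j.1 = i.1 then hiFin i else if j.1 = i.1 + 1 then loFin i else j

/-- `e_i = (1/r) ∑_{s=0}^{r-1} t_i^s t_{i+1}^{-s}` (with `t^{-s}` written
`t^{(r-s) % r}`, using `t^r = 1` in the quotient). -/
noncomputable def de (r : ℕ) {n : ℕ} (i : Fin (n - 1)) : DFA K n :=
  (r : K)⁻¹ • ∑ s ∈ Finset.range r, dt K (loFin i) ^ s * dt K (hiFin i) ^ ((r - s) % r)

/-- The defining relations of the degenerate affine Yokonuma–Hecke algebra `D_{r,n}`. -/
inductive DRel (r n : ℕ) : DFA K n → DFA K n → Prop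
  | ff {i j : Fin (n - 1)} (h : i.1 + 2 ≤ j.1 ∨ j.1 + 2 ≤ i.1) :
      DRel r n (df K i * df K j) (df K j * df K i)
  | braid {i j : Fin (n - 1)} (h : j.1 = i.1 + 1) :
      DRel r n (df K i * df K j * df K i) (df K j * df K i * df K j)
  | tt (i j : Fin n) : DRel r n (dt K i * dt K j) (dt K j * dt K i)
  | ft (i : Fin (n - 1)) (j : Fin n) :
      DRel r n (df K i * dt K j) (dt K (sAct i j) * df K i)
  | tpow (i : Fin n) : DRel r n (dt K i ^ r) 1
  | fsq (i : Fin (n - 1)) : DRel r n (df K i ^ 2) 1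
  | xx (i j : Fin n) : DRel r n (dx K i * dx K j) (dx K j * dx K i)
  | fx (i : Fin (n - 1)) :
      DRel r n (df K i * dx K (hiFin i)) (dx K (loFin i) * df K i + de K r i)
  | fx' (i : Fin (n - 1)) (j : Fin n) (h : j ≠ loFin i ∧ j ≠ hiFin i) :
      DRel r n (df K i * dx K j) (dx K j * df K i)
  | tx (i j : Fin n) : DRel r n (dt K j * dx K i) (dx K i * dt K j)

/-- The degenerate affine Yokonuma–Hecke algebra `D_{r,n}` over `K`. -/
abbrev DYH (r n : ℕ) : Type := RingQuot (DRel K r n)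

noncomputable def dπ (r n : ℕ) : DFA K n →ₐ[K] DYH K r n :=
  RingQuot.mkAlgHom K (DRel K r n)

noncomputable def tD (r n : ℕ) (j : Fin n) : DYH K r n := dπ K r n (dt K j)
noncomputable def fD (r n : ℕ) (i : Fin (n - 1)) : DYH K r n := dπ K r n (df K i)
noncomputable def xD (r n : ℕ) (j : Fin n) : DYH K r n := dπ K r n (dx K j)

/-! ### Representations -/

/-- Simplicity (irreducibility) of a representation. -/
def SimpleRepK {A M : Type} [Semiring A] [Algebra K A] [AddCommGroup M] [Module K M]
    (ρ : A →ₐ[K] Module.End K M) : Prop :=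
  (∃ v : M, v ≠ 0) ∧
    ∀ W : Submodule K M, (∀ a : A, ∀ w ∈ W, ρ a w ∈ W) → W = ⊥ ∨ W = ⊤

variable {M : Type} [AddCommGroup M] [Module K M]

/-- An integral representation: all eigenvalues of the `x_i` lie in `I = ℤ·1 ⊆ K`. -/
def IntegralRep (r n : ℕ) (ρ : DYH K r n →ₐ[K] Module.End K M) : Prop :=
  ∀ (a : Fin n) (c : K), (∃ w : M, w ≠ 0 ∧ ρ (xD K r n a) w = c • w) → ∃ m : ℤ, c = (m : K)

/-- A completely splittable representation: the `x_i` act semisimply. -/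
def SplittableRep (r n : ℕ) (ρ : DYH K r n →ₐ[K] Module.End K M) : Prop :=
  ∀ a : Fin n, (ρ (xD K r n a)).IsSemisimple

/-- Membership in the generalized weight space `M_{(α,j)}`. -/
def InGenWtD (r n : ℕ) (ρ : DYH K r n →ₐ[K] Module.End K M) (ζ : K)
    (α : Fin n → K) (j : Fin n → Fin r) (w : M) : Prop :=
  ∀ a : Fin n,
    (∃ N : ℕ, ((ρ (xD K r n a) - α a • (1 : Module.End K M)) ^ N) w = 0) ∧
    ρ (tD K r n a) w = ζ ^ (j a : ℕ) • w

/-- `w` is a weight vector of weight `(α, j)`: a simultaneous eigenvector with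
`x_i`-eigenvalue `α_i` and `t_i`-eigenvalue `ζ_{j_i} = ζ^{j_i - 1}`. -/
def InWtD (r n : ℕ) (ρ : DYH K r n →ₐ[K] Module.End K M) (ζ : K)
    (α : Fin n → K) (j : Fin n → Fin r) (w : M) : Prop :=
  ∀ a : Fin n, ρ (xD K r n a) w = α a • w ∧ ρ (tD K r n a) w = ζ ^ (j a : ℕ) • w

/-- The weight `(s_iα, s_ij)` (or `(s_iα, j)` etc.) obtained by exchanging the
entries at places `i`, `i+1`. -/
def swapWt {n : ℕ} {β : Type} (i : Fin (n - 1)) (α : Fin n → β) : Fin n → β :=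
  α ∘ Equiv.swap (loFin i) (hiFin i)

end DegYH


section Aux
variable {K : Type} [Field K] {M : Type} [AddCommGroup M] [Module K M]

lemma semis_eigen {f : Module.End K M} (hf : f.IsSemisimple) {c : K} {w : M} {N : ℕ}
    (h : ((f - c • (1 : Module.End K M)) ^ N) w = 0) : f w = c • w := by
  have h1 : w ∈ f.genEigenspace c ⊤ :=
    Module.End.mem_genEigenspace_top.mpr ⟨N, LinearMap.mem_ker.mpr h⟩
  rw [hf.isFinitelySemisimple.genEigenspace_eq_eigenspace c ENat.top_pos] at h1
  exact Module.End.mem_eigenspace_iff.mp h1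

lemma pow_eigen {f : Module.End K M} {c : K} {w : M} (h : f w = c • w) (m : ℕ) :
    (f ^ m) w = c ^ m • w := by
  induction m with
  | zero => simp
  | succ m ih =>
      rw [pow_succ, pow_succ, Module.End.mul_apply, h, map_smul, ih, smul_smul, mul_comm]

end Aux

open DegYH in
/-- **Lemma 5.5**: let `𝕂` be algebraically closed of characteristic `p > 0` with
`p ∤ r`, and let `M` be an irreducible completely splittable integral module over the
degenerate affine Yokonuma–Hecke algebra `D_{r,n}`. Then for every weight `(α, j)`
of `M` and every `1 ≤ i < n`, one has `α_i ≠ α_{i+1}` whenever `j_i = j_{i+1}`. -/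
theorem splittable_weights_separated
    (K : Type) [Field K] [IsAlgClosed K] (p r n : ℕ) [CharP K p]
    (hp : 0 < p) (hpr : ¬ p ∣ r) (hr : 0 < r) (hn : 0 < n)
    (ζ : K) (hζ : IsPrimitiveRoot ζ r)
    (M : Type) [AddCommGroup M] [Module K M] [FiniteDimensional K M]
    (ρ : DYH K r n →ₐ[K] Module.End K M)
    (hsimple : SimpleRepK K ρ) (hsplit : SplittableRep K r n ρ)
    (hint : IntegralRep K r n ρ)
    (α : Fin n → K) (j : Fin n → Fin r)
    (hwt : ∃ w : M, w ≠ 0 ∧ InGenWtD K r n ρ ζ α j w) :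
    ∀ i : Fin (n - 1), j (loFin i) = j (hiFin i) → α (loFin i) ≠ α (hiFin i) := by
  intro i hj ha
  obtain ⟨w, hw0, hw⟩ := hwt
  set φ : DFA K n →ₐ[K] Module.End K M := ρ.comp (dπ K r n) with hφ
  have hrel : ∀ {x y : DFA K n}, DRel K r n x y → φ x = φ y := by
    intro x y h
    have : dπ K r n x = dπ K r n y := RingQuot.mkAlgHom_rel K h
    simp only [hφ, AlgHom.comp_apply, this]
  have hxφ : ∀ a : Fin n, φ (dx K a) = ρ (xD K r n a) := fun a => rfl
  have htφ : ∀ a : Fin n, φ (dt K a) = ρ (tD K r n a) := fun a => rfl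
  have hfφ : φ (df K i) = ρ (fD K r n i) := rfl
  -- w is a genuine eigenvector for the x's
  have hx : ∀ a : Fin n, ρ (xD K r n a) w = α a • w := by
    intro a
    obtain ⟨N, hN⟩ := (hw a).1
    exact semis_eigen (hsplit a) hN
  have ht : ∀ a : Fin n, ρ (tD K r n a) w = ζ ^ (j a : ℕ) • w := fun a => (hw a).2
  have hrK : (r : K) ≠ 0 := by
    rw [Ne, CharP.cast_eq_zero_iff K p r]; exact hpr
  -- e_i acts as the identity on w
  have hE : φ (de K r i) w = w := by
    have hterm : ∀ s ∈ Finset.range r,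
        φ (dt K (loFin i) ^ s * dt K (hiFin i) ^ ((r - s) % r)) w = w := by
      intro s hs
      rw [Finset.mem_range] at hs
      have h1 : (φ (dt K (hiFin i)) ^ ((r - s) % r)) w
          = (ζ ^ (j (hiFin i) : ℕ)) ^ ((r - s) % r) • w := pow_eigen (by rw [htφ]; exact ht _) _
      have h2 : (φ (dt K (loFin i)) ^ s) w
          = (ζ ^ (j (loFin i) : ℕ)) ^ s • w := pow_eigen (by rw [htφ]; exact ht _) _
      rw [map_mul, map_pow, map_pow, Module.End.mul_apply, h1, map_smul, h2, smul_smul]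
      have hdvd : r ∣ s + (r - s) % r := by
        rcases Nat.eq_zero_or_pos s with h0 | h0
        · subst h0; simp
        · have : (r - s) % r = r - s := Nat.mod_eq_of_lt (by omega)
          rw [this]
          exact ⟨1, by omega⟩
      have hone : (ζ ^ (j (loFin i) : ℕ)) ^ s * (ζ ^ (j (hiFin i) : ℕ)) ^ ((r - s) % r) = 1 := by
        rw [hj, ← pow_mul, ← pow_mul, ← pow_add, ← mul_add,
          mul_comm ((j (hiFin i) : ℕ)) (s + (r - s) % r)]
        rw [pow_mul, hζ.pow_eq_one_iff_dvd _ |>.mpr hdvd, one_pow]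
      rw [mul_comm, hone, one_smul]
    rw [de, map_smul, LinearMap.smul_apply, map_sum, LinearMap.sum_apply,
      Finset.sum_congr rfl hterm, Finset.sum_const, Finset.card_range,
      ← Nat.cast_smul_eq_nsmul K r w, smul_smul, inv_mul_cancel₀ hrK, one_smul]
  -- the key relation applied to w
  have hfx := congrArg (fun g : Module.End K M => g w) (hrel (DRel.fx i))
  simp only [map_mul, map_add, Module.End.mul_apply, LinearMap.add_apply] at hfx
  have hhi : φ (dx K (hiFin i)) w = α (hiFin i) • w := by rw [hxφ]; exact hx _
  rw [hE, hhi, map_smul] at hfx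
  have hXv : ρ (xD K r n (loFin i)) (φ (df K i) w)
      = α (loFin i) • (φ (df K i) w) - w := by
    rw [← hxφ, ha, eq_sub_iff_add_eq]
    exact hfx.symm
  have hXw := hx (loFin i)
  set X := ρ (xD K r n (loFin i)) with hXdef
  set a := α (loFin i) with hadef
  set v := φ (df K i) w with hvdef
  have h1 : (X - a • (1 : Module.End K M)) v = -w := by
    rw [LinearMap.sub_apply, LinearMap.smul_apply, Module.End.one_apply, hXv]
    abel
  have h2 : (X - a • (1 : Module.End K M)) w = 0 := by
    rw [LinearMap.sub_apply, LinearMap.smul_apply, Module.End.one_apply, hXw, sub_self]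
  have h3 : ((X - a • (1 : Module.End K M)) ^ 2) v = 0 := by
    rw [pow_two, Module.End.mul_apply, h1, map_neg, h2, neg_zero]
  have h4 : X v = a • v := semis_eigen (hsplit (loFin i)) h3
  exact hw0 (sub_eq_self.mp (hXv.symm.trans h4))
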